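/- arXiv:2408.15528 — 2 statements merged into one kernel-verified Lean document; each statement's English description precedes it below -/
import Mathlib

section
/- For an n-fold Pfister form φ over a field F (char ≠ 2), the group of similarity factors G(φ) equals the set of nonzero values represented by φ, D(φ). In particular if φ is isotropic (hence hyperbolic), G(φ) = F*. -/
/-- The `n`-fold Pfister form `⟨1, -a₁⟩ ⊗ ⋯ ⊗ ⟨1, -aₙ⟩` over `F`, realized as the
diagonal form on `(Fin n → Bool) → F` whose weight at a subset `s` is
`∏_{i ∈ s} (-aᵢ)`. -/
noncomputable def pfisterForm (F : Type*) [Field F] {n : ℕ} (a : Fin n → F) :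
    QuadraticForm F ((Fin n → Bool) → F) :=
  QuadraticMap.weightedSumSquares F
    (fun s : Fin n → Bool => ∏ i : Fin n, if s i then -a i else 1)

/-!
Call a form round if every nonzero value it represents is a similarity factor. Roundness
passes from `ψ` to `ψ ⊥ cψ`: a nonzero value `x + c y` with `x = ψ v₁ ≠ 0`, `y = ψ v₂ ≠ 0`
factors as `x · (1 + d)` with `d = c y / x`; here `x` is a similarity factor of `ψ`, hence of
`ψ ⊥ cψ`, and `ψ ⊥ cψ ≅ ψ ⊥ dψ` because `y / x` is one as well, while every nonzero `u² + d v²`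
is a similarity factor of `ψ ⊥ dψ` through the isometry `(p, q) ↦ (u p - d v q, v p + u q)`.
As `⟨1⟩` is round and `⟨⟨a₁, …, aₙ₊₁⟩⟩ ≅ ψ ⊥ (-a₁) ψ` with `ψ = ⟨⟨a₂, …, aₙ₊₁⟩⟩`, every Pfister
form is round, which is `D(φ) ⊆ G(φ)`; conversely `φ` represents `1`, so `G(φ) ⊆ D(φ)`. If `φ`
is isotropic, an isotropic vector pairs nontrivially with some basis vector (as `2 ≠ 0`), and
moving along it makes `φ` universal.
-/

namespace QuadraticMap

variable {F M M₁ M₂ : Type*} [Field F] [AddCommGroup M] [Module F M]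
  [AddCommGroup M₁] [Module F M₁] [AddCommGroup M₂] [Module F M₂]

theorem Equivalent.smul {Q₁ : QuadraticMap F M₁ F} {Q₂ : QuadraticMap F M₂ F} (c : F)
    (h : Q₁.Equivalent Q₂) : (c • Q₁).Equivalent (c • Q₂) :=
  h.elim fun e => ⟨{ e.toLinearEquiv with
    map_app' := fun m => by
      change (c • Q₂) (e m) = (c • Q₁) m
      rw [smul_apply, smul_apply, e.map_app] }⟩

theorem smul_prod (c : F) (Q₁ : QuadraticMap F M₁ F) (Q₂ : QuadraticMap F M₂ F) :
    c • Q₁.prod Q₂ = (c • Q₁).prod (c • Q₂) := by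
  ext
  simp [mul_add]

theorem map_smul_add_smul (Q : QuadraticMap F M F) (r s : F) (x y : M) :
    Q (r • x + s • y) = r * r * Q x + r * s * polar Q x y + s * s * Q y := by
  rw [QuadraticMap.map_add Q, QuadraticMap.map_smul, QuadraticMap.map_smul, polar_smul_left,
    polar_smul_right, smul_eq_mul, smul_eq_mul, smul_eq_mul, smul_eq_mul]
  ring

theorem exists_apply_eq_of_polar_ne_zero {Q : QuadraticMap F M F} {v w : M} (hv : Q v = 0)
    (hvw : polar Q v w ≠ 0) (l : F) : ∃ x, Q x = l :=
  ⟨((l - Q w) / polar Q v w) • v + (1 : F) • w, by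
    rw [map_smul_add_smul, hv]
    field_simp
    ring⟩

def IsSimilarityFactor (Q : QuadraticMap F M F) (t : F) : Prop :=
  (t • Q).Equivalent Q

def IsRound (Q : QuadraticMap F M F) : Prop :=
  ∀ t ≠ 0, (∃ v, Q v = t) → Q.IsSimilarityFactor t

theorem isSimilarityFactor_mul_self (Q : QuadraticMap F M F) {u : F} (hu : u ≠ 0) :
    Q.IsSimilarityFactor (u * u) :=
  ⟨{ LinearEquiv.smulOfNeZero F M u hu with
      map_app' := fun m => by
        change Q (u • m) = ((u * u) • Q) m
        rw [QuadraticMap.map_smul, smul_apply] }⟩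

variable {Q : QuadraticMap F M F} {Q₁ : QuadraticMap F M₁ F} {Q₂ : QuadraticMap F M₂ F} {s t : F}

theorem IsSimilarityFactor.mul (hs : Q.IsSimilarityFactor s) (ht : Q.IsSimilarityFactor t) :
    Q.IsSimilarityFactor (s * t) := by
  rw [IsSimilarityFactor, mul_smul]
  exact (Equivalent.smul s ht).trans hs

theorem IsSimilarityFactor.inv (ht : Q.IsSimilarityFactor t) (h0 : t ≠ 0) :
    Q.IsSimilarityFactor t⁻¹ := by
  have := (Equivalent.smul t⁻¹ ht).symm
  rwa [smul_smul, inv_mul_cancel₀ h0, one_smul] at this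

theorem IsSimilarityFactor.smul (c : F) (ht : Q.IsSimilarityFactor t) :
    (c • Q).IsSimilarityFactor t := by
  rw [IsSimilarityFactor, smul_comm]
  exact Equivalent.smul c ht

theorem IsSimilarityFactor.prod (h₁ : Q₁.IsSimilarityFactor t) (h₂ : Q₂.IsSimilarityFactor t) :
    (Q₁.prod Q₂).IsSimilarityFactor t := by
  rw [IsSimilarityFactor, smul_prod]
  exact Equivalent.prod h₁ h₂

theorem IsSimilarityFactor.of_equivalent (h : Q₁.Equivalent Q₂) (ht : Q₁.IsSimilarityFactor t) :
    Q₂.IsSimilarityFactor t :=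
  ((Equivalent.smul t h.symm).trans ht).trans h

theorem IsSimilarityFactor.exists_apply_eq (ht : Q.IsSimilarityFactor t) {v : M} (hv : Q v = 1) :
    ∃ w, Q w = t := by
  obtain ⟨e⟩ := ht
  exact ⟨e v, by simp [hv]⟩

theorem IsRound.of_equivalent (h : Q₁.Equivalent Q₂) (hQ : Q₁.IsRound) : Q₂.IsRound := by
  obtain ⟨e⟩ := h
  rintro t ht ⟨v, rfl⟩
  exact (hQ _ ht ⟨e.symm v, by simp⟩).of_equivalent ⟨e⟩

theorem isRound_of_forall_isSquare (h : ∀ v, IsSquare (Q v)) : Q.IsRound := by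
  rintro t ht ⟨v, rfl⟩
  obtain ⟨u, hu⟩ := h v
  rw [hu] at ht ⊢
  exact isSimilarityFactor_mul_self Q (by rintro rfl; simp at ht)

theorem isSimilarityFactor_prod_smul_self (ψ : QuadraticMap F M F) (c u v : F)
    (h : u * u + c * (v * v) ≠ 0) :
    (ψ.prod (c • ψ)).IsSimilarityFactor (u * u + c * (v * v)) := by
  set t := u * u + c * (v * v)
  let f : M × M →ₗ[F] M × M :=
    (u • LinearMap.fst F M M + (-(c * v)) • LinearMap.snd F M M).prod
      (v • LinearMap.fst F M M + u • LinearMap.snd F M M)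
  let g : M × M →ₗ[F] M × M :=
    t⁻¹ • (u • LinearMap.fst F M M + (c * v) • LinearMap.snd F M M).prod
      (-v • LinearMap.fst F M M + u • LinearMap.snd F M M)
  have hfg : f ∘ₗ g = LinearMap.id := by
    ext p <;> simp [f, g] <;> match_scalars <;> field_simp <;> ring
  have hgf : g ∘ₗ f = LinearMap.id := by
    ext p <;> simp [f, g] <;> match_scalars <;> field_simp <;> ring
  refine ⟨⟨LinearEquiv.ofLinearMap f g hfg hgf, fun p => ?_⟩⟩
  have hf : f p = (u • p.1 + (-(c * v)) • p.2, v • p.1 + u • p.2) := rfl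
  change (ψ.prod (c • ψ)) (f p) = (t • ψ.prod (c • ψ)) p
  simp only [hf, prod_apply, smul_apply, smul_eq_mul, map_smul_add_smul]
  ring

theorem IsRound.prod_smul_self {ψ : QuadraticMap F M F} (hψ : ψ.IsRound) (c : F) :
    (ψ.prod (c • ψ)).IsRound := by
  rintro t ht ⟨⟨v₁, v₂⟩, rfl⟩
  simp only [prod_apply, smul_apply, smul_eq_mul] at ht ⊢
  set x := ψ v₁
  set y := ψ v₂
  by_cases hy : y = 0
  · rw [hy, mul_zero, add_zero] at ht ⊢
    have hx := hψ x ht ⟨v₁, rfl⟩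
    exact hx.prod (hx.smul c)
  have hyψ := hψ y hy ⟨v₂, rfl⟩
  have hcy : (ψ.prod (c • ψ)).Equivalent (ψ.prod ((c * y) • ψ)) := by
    rw [mul_smul]
    exact (Equivalent.refl ψ).prod (Equivalent.smul c hyψ).symm
  refine IsSimilarityFactor.of_equivalent hcy.symm ?_
  by_cases hx : x = 0
  · have h := isSimilarityFactor_prod_smul_self ψ (c * y) 0 1 (by simpa [hx] using ht)
    simpa [hx] using h
  have hxψ := hψ x hx ⟨v₁, rfl⟩
  have hd : (ψ.prod ((c * y / x) • ψ)).Equivalent (ψ.prod ((c * y) • ψ)) := by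
    rw [div_eq_mul_inv, mul_smul]
    exact (Equivalent.refl ψ).prod (Equivalent.smul _ (hxψ.inv hx))
  have hfactor : x + c * y = x * (1 * 1 + c * y / x * (1 * 1)) := by
    field_simp
  rw [hfactor] at ht ⊢
  have hbinary := isSimilarityFactor_prod_smul_self ψ (c * y / x) 1 1 (right_ne_zero_of_mul ht)
  exact (hxψ.prod (hxψ.smul _)).mul (hbinary.of_equivalent hd)

section WeightedSumSquares

variable {ι κ : Type*} [Fintype ι] [Fintype κ]

theorem weightedSumSquares_smul (c : F) (w : ι → F) :
    weightedSumSquares F (c • w) = c • weightedSumSquares F w := by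
  ext v
  simp [weightedSumSquares_apply, Finset.mul_sum, mul_assoc]

theorem equivalent_weightedSumSquares_comp (w : ι → F) (e : κ ≃ ι) :
    (weightedSumSquares F w).Equivalent (weightedSumSquares F (w ∘ e)) :=
  ⟨⟨LinearEquiv.funCongrLeft F F e, fun v => by
    simpa [weightedSumSquares_apply] using e.sum_comp fun i => w i * (v i * v i)⟩⟩

theorem equivalent_weightedSumSquares_sumElim (w₁ : ι → F) (w₂ : κ → F) :
    (weightedSumSquares F (Sum.elim w₁ w₂)).Equivalent
      ((weightedSumSquares F w₁).prod (weightedSumSquares F w₂)) :=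
  ⟨⟨LinearEquiv.sumArrowLequivProdArrow ι κ F F, fun v => by
    simp [weightedSumSquares_apply, Fintype.sum_sum_type]⟩⟩

variable [DecidableEq ι]

theorem weightedSumSquares_apply_single (w : ι → F) (i : ι) :
    weightedSumSquares F w (Pi.single i 1) = w i := by
  simp [weightedSumSquares_apply, Pi.single_apply]

theorem polar_weightedSumSquares_single (w v : ι → F) (i : ι) :
    polar (weightedSumSquares F w) v (Pi.single i 1) = 2 * (w i * v i) := by
  have h : polar (weightedSumSquares F w) v (Pi.single i 1) =
      ∑ j, w j * (2 * v j * (Pi.single i (1 : F) : ι → F) j) := by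
    simp only [polar, weightedSumSquares_apply, Pi.add_apply, smul_eq_mul,
      ← Finset.sum_sub_distrib]
    exact Finset.sum_congr rfl fun j _ => by ring
  simp [h, Pi.single_apply]
  ring

end WeightedSumSquares

end QuadraticMap

section Pfister

open QuadraticMap

variable {F : Type*} [Field F]

def pfisterWeight {n : ℕ} (a : Fin n → F) (s : Fin n → Bool) : F :=
  ∏ i, if s i then -a i else 1

theorem pfisterForm_eq {n : ℕ} (a : Fin n → F) :
    pfisterForm F a = weightedSumSquares F (pfisterWeight a) :=
  rfl

theorem pfisterWeight_ne_zero {n : ℕ} {a : Fin n → F} (ha : ∀ i, a i ≠ 0) (s : Fin n → Bool) :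
    pfisterWeight a s ≠ 0 :=
  Finset.prod_ne_zero_iff.mpr fun i _ => by split_ifs <;> simp [ha i]

theorem pfisterForm_equivalent_prod {n : ℕ} (a : Fin (n + 1) → F) :
    (pfisterForm F a).Equivalent
      ((pfisterForm F (Fin.tail a)).prod ((-a 0) • pfisterForm F (Fin.tail a))) := by
  let e := (Equiv.boolProdEquivSum (Fin n → Bool)).symm.trans (Fin.consEquiv fun _ => Bool)
  have hw : pfisterWeight a ∘ e =
      Sum.elim (pfisterWeight (Fin.tail a)) ((-a 0) • pfisterWeight (Fin.tail a)) := by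
    ext (s | s) <;> simp [e, pfisterWeight, Fin.prod_univ_succ, Fin.tail]
  rw [pfisterForm_eq, pfisterForm_eq, ← weightedSumSquares_smul]
  refine (equivalent_weightedSumSquares_comp _ e).trans ?_
  rw [hw]
  exact equivalent_weightedSumSquares_sumElim _ _

theorem isRound_pfisterForm {n : ℕ} (a : Fin n → F) : (pfisterForm F a).IsRound := by
  induction n with
  | zero =>
    exact isRound_of_forall_isSquare fun v =>
      ⟨v fun _ => false, by
        rw [pfisterForm_eq, weightedSumSquares_apply, Fintype.sum_subsingleton _ fun _ => false]
        simp [pfisterWeight]⟩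
  | succ n ih =>
    exact ((ih (Fin.tail a)).prod_smul_self (-a 0)).of_equivalent
      (pfisterForm_equivalent_prod a).symm

theorem pfisterForm_single_false {n : ℕ} (a : Fin n → F) :
    pfisterForm F a (Pi.single (fun _ => false) 1) = 1 := by
  rw [pfisterForm_eq, weightedSumSquares_apply_single]
  simp [pfisterWeight]

theorem exists_pfisterForm_eq_of_not_anisotropic (hchar : (2 : F) ≠ 0) {n : ℕ} {a : Fin n → F}
    (ha : ∀ i, a i ≠ 0) (hiso : ¬ (pfisterForm F a).Anisotropic) (l : F) :
    ∃ v, pfisterForm F a v = l := by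
  obtain ⟨v, hv0, hv⟩ := (not_anisotropic_iff_exists _).mp hiso
  obtain ⟨s, hs⟩ := Function.ne_iff.mp hv0
  refine exists_apply_eq_of_polar_ne_zero hv (w := Pi.single s 1) ?_ l
  rw [pfisterForm_eq, polar_weightedSumSquares_single]
  exact mul_ne_zero hchar (mul_ne_zero (pfisterWeight_ne_zero ha s) hs)

end Pfister

/-- for an `n`-fold Pfister form `φ` over a field `F` (char ≠ 2) with
slots `a i ∈ F*`, the group of similarity factors `G(φ) = {λ ∈ F* : λφ ≅ φ}` equals
the set `D(φ)` of nonzero values represented by `φ`.  In particular, if `φ` is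
isotropic (hence hyperbolic) then `G(φ) = F*`. -/
theorem stmt7 (F : Type*) [Field F] (hchar : (2 : F) ≠ 0)
    (n : ℕ) (a : Fin n → F) (ha : ∀ i, a i ≠ 0) :
    ({l : F | l ≠ 0 ∧ QuadraticMap.Equivalent (l • pfisterForm F a) (pfisterForm F a)}
      = {l : F | l ≠ 0 ∧ ∃ v, pfisterForm F a v = l}) ∧
    (¬ (pfisterForm F a).Anisotropic →
      ∀ l : F, l ≠ 0 →
        QuadraticMap.Equivalent (l • pfisterForm F a) (pfisterForm F a)) := by
  have hround := isRound_pfisterForm a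
  refine ⟨Set.ext fun l => and_congr_right fun hl => ⟨fun h => ?_, hround l hl⟩, ?_⟩
  · exact QuadraticMap.IsSimilarityFactor.exists_apply_eq h (pfisterForm_single_false a)
  · intro hiso l hl
    exact hround l hl (exists_pfisterForm_eq_of_not_anisotropic hchar ha hiso l)
end

section
/- Let F be a field with u-invariant at most 8 (every 9-dimensional quadratic form over F is isotropic). Then the spinor norm group of any 6-dimensional quadratic form q over F with trivial discriminant is all of F*: Sn(q) = F*. -/
/-!
For `l ∈ F*`, the form `q ⊥ -l·q` on `V × V` has dimension 12 > 8, so it has a nontrivial zero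
`(v, w)`: `q v = l · q w`. If `q w ≠ 0`, then `l = q v · q w · (q w)⁻²`. Otherwise `q` is
isotropic, hence universal since it is nondegenerate, and `l = q v₁ · q w₁` with `q v₁ = 1`,
`q w₁ = l`.
-/

open Module

namespace QuadraticMap

theorem Anisotropic.comp {R M N P : Type*} [CommSemiring R] [AddCommMonoid M] [AddCommMonoid N]
    [AddCommMonoid P] [Module R M] [Module R N] [Module R P] {Q : QuadraticMap R M P}
    (hQ : Q.Anisotropic) {f : N →ₗ[R] M} (hf : Function.Injective f) : (Q.comp f).Anisotropic :=
  fun x hx => hf (by rw [hQ _ hx, map_zero])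

variable {F V : Type*} [Field F] [AddCommGroup V] [Module F V]

theorem not_anisotropic_of_le_finrank [FiniteDimensional F V] {n : ℕ}
    (hu : ∀ Q : QuadraticForm F (Fin n → F), ¬ Q.Anisotropic) (hn : n ≤ finrank F V)
    (Q : QuadraticForm F V) : ¬ Q.Anisotropic := by
  have hli : LinearIndependent F (fun i : Fin n => finBasis F V (Fin.castLE hn i)) :=
    (finBasis F V).linearIndependent.comp _ (Fin.castLE_injective hn)
  exact fun hQ => hu _ (hQ.comp hli.fintypeLinearCombination_injective)

theorem surjective_of_not_anisotropic {Q : QuadraticForm F V}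
    (hreg : (polarBilin Q).Nondegenerate) (hQ : ¬ Q.Anisotropic) : Function.Surjective Q := by
  obtain ⟨z, hz, hQz⟩ := (not_anisotropic_iff_exists Q).1 hQ
  obtain ⟨u, hu⟩ : ∃ u, polar Q z u ≠ 0 := by
    by_contra! h
    exact hz (hreg.1 z h)
  intro a
  refine ⟨((a - Q u) / polar Q z u) • z + u, ?_⟩
  rw [QuadraticMap.map_add Q, QuadraticMap.map_smul, polar_smul_left, hQz, smul_eq_mul, smul_eq_mul]
  field_simp
  ring

end QuadraticMap

open QuadraticMap

section SpinorNorm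

variable {F V : Type*} [Field F] [AddCommGroup V] [Module F V]

/-- Generators of `Sn(q) · F*²`. -/
def spinorNormGenerators (q : QuadraticForm F V) : Set Fˣ :=
  {x : Fˣ | ∃ v w : V, q v ≠ 0 ∧ q w ≠ 0 ∧ (x : F) = q v * q w} ∪ {x : Fˣ | ∃ y : Fˣ, x = y ^ 2}

theorem mem_closure_spinorNormGenerators {q : QuadraticForm F V}
    (hreg : (polarBilin q).Nondegenerate) {l : Fˣ} {v w : V} (hvw : (v, w) ≠ 0)
    (h : q v = l * q w) : l ∈ Subgroup.closure (spinorNormGenerators q) := by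
  by_cases hqw : q w = 0
  · have hiso : ¬ q.Anisotropic := by
      rw [hqw, mul_zero] at h
      exact fun hq => hvw (Prod.ext (hq v h) (hq w hqw))
    obtain ⟨v₁, hv₁⟩ := surjective_of_not_anisotropic hreg hiso 1
    obtain ⟨w₁, hw₁⟩ := surjective_of_not_anisotropic hreg hiso l
    refine Subgroup.subset_closure (Or.inl ⟨v₁, w₁, ?_, ?_, ?_⟩) <;> simp [hv₁, hw₁]
  · have hqv : q v ≠ 0 := h ▸ mul_ne_zero l.ne_zero hqw
    have hl : l = Units.mk0 (q v * q w) (mul_ne_zero hqv hqw) * (Units.mk0 (q w) hqw)⁻¹ ^ 2 := by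
      ext
      simp only [Units.val_mul, Units.val_pow_eq_pow_val, Units.val_inv_eq_inv_val,
        Units.val_mk0, h]
      field_simp
    rw [hl]
    exact Subgroup.mul_mem _ (Subgroup.subset_closure (Or.inl ⟨v, w, hqv, hqw, rfl⟩))
      (Subgroup.subset_closure (Or.inr ⟨_, rfl⟩))

end SpinorNorm

theorem stmt12_general (F : Type*) [Field F]
    (hu : ∀ q9 : QuadraticForm F (Fin 9 → F), ¬ q9.Anisotropic)
    (V : Type*) [AddCommGroup V] [Module F V] [FiniteDimensional F V]
    (q : QuadraticForm F V)
    (hreg : LinearMap.BilinForm.Nondegenerate (QuadraticMap.polarBilin q))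
    (hdim : Module.finrank F V = 6) :
    ∀ l : Fˣ, l ∈ Subgroup.closure
      ({x : Fˣ | ∃ v w : V, q v ≠ 0 ∧ q w ≠ 0 ∧ (x : F) = q v * q w}
        ∪ {x : Fˣ | ∃ y : Fˣ, x = y ^ 2}) := by
  intro l
  have hiso : ¬ (q.prod (-(l : F) • q)).Anisotropic :=
    not_anisotropic_of_le_finrank hu (by rw [finrank_prod, hdim]; norm_num) _
  obtain ⟨⟨v, w⟩, hvw, hzero⟩ := (not_anisotropic_iff_exists _).1 hiso
  refine mem_closure_spinorNormGenerators hreg hvw ?_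
  simp only [prod_apply, smul_apply, smul_eq_mul] at hzero
  linear_combination hzero

/-- let `F` be a field (char ≠ 2) with u-invariant at most 8, i.e.
every 9-dimensional quadratic form over `F` is isotropic.  Then for any
nondegenerate 6-dimensional quadratic form `q` over `F` with trivial (signed)
discriminant, the spinor norm group is all of `F*` modulo squares:
`Sn(q)·F*² = F*`, where `Sn(q)` is generated by the products `q(v)·q(w)` over
anisotropic vectors `v, w`. -/
theorem stmt12 (F : Type*) [Field F] [Invertible (2 : F)]
    (hu : ∀ q9 : QuadraticForm F (Fin 9 → F), ¬ q9.Anisotropic)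
    (V : Type*) [AddCommGroup V] [Module F V] [FiniteDimensional F V]
    (q : QuadraticForm F V)
    (hreg : LinearMap.BilinForm.Nondegenerate (QuadraticMap.polarBilin q))
    (hdim : Module.finrank F V = 6)
    (hdisc : ∃ (b : Module.Basis (Fin 6) F V) (c : F), c ≠ 0 ∧
      -((LinearMap.toMatrix₂ b b (QuadraticMap.associated (R := F) q)).det) = c ^ 2) :
    ∀ l : Fˣ, l ∈ Subgroup.closure
      ({x : Fˣ | ∃ v w : V, q v ≠ 0 ∧ q w ≠ 0 ∧ (x : F) = q v * q w}
        ∪ {x : Fˣ | ∃ y : Fˣ, x = y ^ 2}) :=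
  stmt12_general F hu V q hreg hdim
end
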